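/- Let F be a finite field with q elements and let 1 ≤ k ≤ n. Then g_{n,k}(X) = (X;q)_k · A_{n−k}(q^k X) in ℚ[X], where g_{n,k}(X) = ∑_{r≥0} (f^0_{n,r,k} − f^1_{n,r,k}) X^r and A_m(X) = ∑_{r≥0} a(m,r,q) X^r is the generating polynomial of the numbers a(m,r,q) of m×m matrices over F of rank r. -/

import Mathlib

open Matrix Finset Polynomial

/-- `fcard F n r k α` is the number of `n × n` matrices over `F` of rank `r`
whose `k`-trace (the sum of the first `k` diagonal entries) equals `α`. -/
noncomputable def fcard (F : Type*) [Field F] [Fintype F] (n r k : ℕ) (α : F) : ℕ :=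
  Nat.card {X : Matrix (Fin n) (Fin n) F // X.rank = r ∧
    (∑ i ∈ Finset.univ.filter (fun i : Fin n => (i : ℕ) < k), X i i) = α}

/-- `acard F m r` is the number of `m × m` matrices over `F` of rank `r`. -/
noncomputable def acard (F : Type*) [Field F] [Fintype F] (m r : ℕ) : ℕ :=
  Nat.card {X : Matrix (Fin m) (Fin m) F // X.rank = r}

/-- `g_{m,k}(X) = ∑_{r ≥ 0} (f^0_{m,r,k} - f^1_{m,r,k}) X^r ∈ ℚ[X]`. -/
noncomputable def gpoly (F : Type*) [Field F] [Fintype F] (m k : ℕ) : Polynomial ℚ :=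
  ∑ r ∈ Finset.range (m + 1),
    Polynomial.C ((fcard F m r k 0 : ℚ) - (fcard F m r k 1 : ℚ)) * Polynomial.X ^ r

/-- The generating polynomial `A_m(X) = ∑_{r ≥ 0} a(m,r,q) X^r ∈ ℚ[X]`. -/
noncomputable def Apoly (F : Type*) [Field F] [Fintype F] (m : ℕ) : Polynomial ℚ :=
  ∑ r ∈ Finset.range (m + 1), Polynomial.C (acard F m r : ℚ) * Polynomial.X ^ r

/-- The q-Pochhammer symbol `(X;q)_n = ∏_{i=0}^{n-1} (1 - q^i X)` as a polynomial in `ℚ[X]`. -/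
noncomputable def qPoch (q : ℚ) (n : ℕ) : Polynomial ℚ :=
  ∏ i ∈ Finset.range n, (1 - Polynomial.C (q ^ i) * Polynomial.X)


namespace Stmt14Aux
set_option linter.unusedSectionVars false
set_option maxHeartbeats 1000000

variable {F : Type*} [Field F] [Fintype F] [DecidableEq F] {m : ℕ}


/-- weight function: indicator of 0 minus indicator of 1, in ℚ. -/
noncomputable def W (t : F) : ℚ := (if t = 0 then 1 else 0) - (if t = 1 then 1 else 0)

lemma sumW : ∑ a : F, W a = 0 := by
  simp [W, Finset.sum_sub_distrib]

lemma sumW_add (t : F) : ∑ a : F, W (a + t) = 0 := by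
  have := Equiv.sum_comp (Equiv.addRight t) W
  simp only [Equiv.coe_addRight] at this
  rw [this]; exact sumW

/-- fibers of an additive map all have the same cardinality as the zero fiber. -/
lemma fiber_card {α β : Type*} [Fintype α] [DecidableEq β] [AddCommGroup α] [AddCommGroup β]
    (φ : α → β) (hφ : ∀ x y, φ (x + y) = φ x + φ y) {c : β} (u₀ : α) (h₀ : φ u₀ = c) :
    #{x ∈ (univ : Finset α) | φ x = c} = #{x ∈ (univ : Finset α) | φ x = 0} := by
  have hsub : ∀ x : α, φ x = φ (x - u₀) + φ u₀ := fun x => by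
    rw [← hφ, sub_add_cancel]
  refine Finset.card_nbij' (fun x => x - u₀) (fun x => x + u₀) ?_ ?_ ?_ ?_
  · intro x hx
    simp only [Finset.mem_coe, mem_filter, mem_univ, true_and] at hx ⊢
    have := hsub x
    rw [hx, h₀] at this
    have h2 : φ (x - u₀) + c = 0 + c := by rw [zero_add]; exact this.symm
    exact add_right_cancel h2
  · intro x hx
    simp only [Finset.mem_coe, mem_filter, mem_univ, true_and] at hx ⊢
    rw [hφ, hx, h₀, zero_add]
  · intro x _; simp
  · intro x _; simp

/-- sum of `g ∘ φ` over the whole (finite) domain equals the kernel size times the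
sum of `g` over the image, for an additive `φ`. -/
lemma sum_comp_additive {α β : Type*} [Fintype α] [DecidableEq β] [AddCommGroup α]
    [AddCommGroup β] (φ : α → β) (hφ : ∀ x y, φ (x + y) = φ x + φ y) (g : β → ℚ) :
    ∑ x : α, g (φ x) =
      (#{x ∈ (univ : Finset α) | φ x = 0} : ℚ) * ∑ b ∈ (univ : Finset α).image φ, g b := by
  rw [Finset.sum_comp g φ, Finset.mul_sum]
  refine Finset.sum_congr rfl fun b hb => ?_
  obtain ⟨u₀, _, h₀⟩ := Finset.mem_image.mp hb
  rw [fiber_card φ hφ u₀ h₀]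
  simp [nsmul_eq_mul]



/-- bordered matrix: `a` in the corner, `b` the rest of the first row, `c` the rest of the
first column, `D` the rest. -/
def border (a : F) (b c : Fin m → F) (D : Matrix (Fin m) (Fin m) F) :
    Matrix (Fin (m + 1)) (Fin (m + 1)) F :=
  Matrix.of (Fin.cons (Fin.cons a b) (fun i => Fin.cons (c i) (D i)))

/-- the `(m+1) × m` matrix whose rows are `b, D 0, D 1, ...`. -/
def Mb (b : Fin m → F) (D : Matrix (Fin m) (Fin m) F) : Matrix (Fin (m + 1)) (Fin m) F :=
  Matrix.of (Fin.cons b D)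

@[simp] lemma border_zero_zero (a : F) (b c : Fin m → F) (D : Matrix (Fin m) (Fin m) F) :
    border a b c D 0 0 = a := rfl

@[simp] lemma border_succ_succ (a : F) (b c : Fin m → F) (D : Matrix (Fin m) (Fin m) F)
    (i j : Fin m) : border a b c D i.succ j.succ = D i j := by
  simp [border, Matrix.of_apply, Fin.cons_succ]

lemma border_transpose (a : F) (b c : Fin m → F) (D : Matrix (Fin m) (Fin m) F) :
    (border a b c D)ᵀ = border a c b Dᵀ := by
  ext i j
  refine Fin.cases ?_ (fun i' => ?_) i <;> refine Fin.cases ?_ (fun j' => ?_) j <;>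
    simp [border, Matrix.transpose_apply, Fin.cons_succ, Fin.cons_zero]

lemma Mb_mulVec (b : Fin m → F) (D : Matrix (Fin m) (Fin m) F) (u : Fin m → F) :
    (Mb b D) *ᵥ u = Fin.cons (b ⬝ᵥ u) (D *ᵥ u) := by
  funext i
  refine Fin.cases ?_ (fun i' => ?_) i <;> simp [Mb, Matrix.mulVec, Fin.cons_succ, Fin.cons_zero] <;> rfl

lemma mem_range_Mb_iff (a : F) (b c : Fin m → F) (D : Matrix (Fin m) (Fin m) F) :
    Fin.cons a c ∈ LinearMap.range (Mb b D).mulVecLin ↔ ∃ u, b ⬝ᵥ u = a ∧ D *ᵥ u = c := by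
  constructor
  · rintro ⟨u, hu⟩
    rw [Matrix.mulVecLin_apply, Mb_mulVec] at hu
    rw [Fin.cons_inj] at hu
    exact ⟨u, hu.1, hu.2⟩
  · rintro ⟨u, h1, h2⟩
    exact ⟨u, by rw [Matrix.mulVecLin_apply, Mb_mulVec, h1, h2]⟩

lemma span_cols_border (a : F) (b c : Fin m → F) (D : Matrix (Fin m) (Fin m) F) :
    Submodule.span F (Set.range (border a b c D)ᵀ) =
      (F ∙ (Fin.cons a c : Fin (m+1) → F)) ⊔ LinearMap.range (Mb b D).mulVecLin := by
  rw [border_transpose]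
  have h1 : Set.range (border a c b Dᵀ) =
      insert (Fin.cons a c : Fin (m+1) → F) (Set.range (fun j => Fin.cons (b j) (Dᵀ j))) := by
    exact Fin.range_cons _ _
  rw [h1, Submodule.span_insert]
  congr 1
  rw [Matrix.range_mulVecLin]
  congr 1
  have : (Mb b D)ᵀ = fun j => Fin.cons (b j) (Dᵀ j) := by
    funext j i
    refine Fin.cases ?_ (fun i' => ?_) i <;>
      simp [Mb, Matrix.transpose_apply, Fin.cons_succ, Fin.cons_zero] <;> rfl
  exact (congrArg Set.range this).symm

lemma finrank_sup_span_singleton {n : ℕ} (V : Submodule F (Fin n → F)) (x : Fin n → F)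
    (hx : x ∉ V) :
    Module.finrank F ((F ∙ x) ⊔ V : Submodule F (Fin n → F)) = Module.finrank F V + 1 := by
  have hx0 : x ≠ 0 := fun h => hx (h ▸ V.zero_mem)
  have hinf : (F ∙ x) ⊓ V = ⊥ := by
    rw [Submodule.eq_bot_iff]
    rintro y ⟨hy1, hy2⟩
    obtain ⟨r, rfl⟩ := Submodule.mem_span_singleton.mp hy1
    rcases eq_or_ne r 0 with h | h
    · rw [h, zero_smul]
    · exact absurd (by simpa [h] using V.smul_mem r⁻¹ hy2) hx
  have := Submodule.finrank_sup_add_finrank_inf_eq (F ∙ x) V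
  rw [hinf] at this
  simp only [finrank_bot, add_zero] at this
  rw [this, finrank_span_singleton hx0, add_comm]

open scoped Classical in
/-- The key rank formula for the bordered matrix. -/
lemma rank_border_eq (a : F) (b c : Fin m → F) (D : Matrix (Fin m) (Fin m) F) :
    (border a b c D).rank = (Mb b D).rank +
      (if (Fin.cons a c : Fin (m+1) → F) ∈ LinearMap.range (Mb b D).mulVecLin then 0 else 1) := by
  rw [Matrix.rank_eq_finrank_span_cols,
    show Set.range (border a b c D).col = Set.range (border a b c D)ᵀ from rfl, span_cols_border a b c D]
  rw [Matrix.rank]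
  by_cases h : (Fin.cons a c : Fin (m+1) → F) ∈ LinearMap.range (Mb b D).mulVecLin
  · rw [if_pos h, add_zero]
    have hsup : (F ∙ (Fin.cons a c : Fin (m+1) → F)) ⊔ LinearMap.range (Mb b D).mulVecLin =
        LinearMap.range (Mb b D).mulVecLin :=
      sup_eq_right.mpr (by rwa [Submodule.span_singleton_le_iff_mem])
    rw [hsup]
  · rw [if_neg h]
    exact finrank_sup_span_singleton _ _ h



/-- the dot-product-with-`b` functional as a linear map -/
def dotL (b : Fin m → F) : (Fin m → F) →ₗ[F] F where
  toFun x := b ⬝ᵥ x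
  map_add' x y := by simp [dotProduct, mul_add, Finset.sum_add_distrib]
  map_smul' r x := by simp [dotProduct, Finset.mul_sum, mul_left_comm]

/-- duality: if `b` kills the kernel of `D` then `b` is in the row space of `D`. -/
lemma exists_vecMul_of_ker_le (b : Fin m → F) (D : Matrix (Fin m) (Fin m) F)
    (h : ∀ y, D *ᵥ y = 0 → b ⬝ᵥ y = 0) : ∃ v, v ᵥ* D = b := by
  have hker : LinearMap.ker D.mulVecLin ≤ LinearMap.ker (dotL b) := by
    intro y hy
    simp only [LinearMap.mem_ker, Matrix.mulVecLin_apply] at hy ⊢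
    exact h y hy
  set f := D.mulVecLin with hf
  set g₀ : ((Fin m → F) ⧸ LinearMap.ker f) →ₗ[F] F := Submodule.liftQ _ (dotL b) hker with hg₀
  set g₁ : LinearMap.range f →ₗ[F] F :=
    g₀.comp (f.quotKerEquivRange.symm : LinearMap.range f →ₗ[F] _) with hg₁
  obtain ⟨g, hg⟩ := LinearMap.exists_extend g₁
  have key : ∀ x, g (D *ᵥ x) = b ⬝ᵥ x := by
    intro x
    have hmem : f x ∈ LinearMap.range f := LinearMap.mem_range_self f x
    have h1 : g (D *ᵥ x) = g₁ ⟨f x, hmem⟩ := by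
      have := congrArg (fun (h : LinearMap.range f →ₗ[F] F) => h ⟨f x, hmem⟩) hg
      exact (by simpa using this : g (f x) = g₁ ⟨f x, hmem⟩)
    rw [h1]
    show g₀ (f.quotKerEquivRange.symm ⟨f x, hmem⟩) = b ⬝ᵥ x
    rw [LinearMap.quotKerEquivRange_symm_apply_image]
    show g₀ ((LinearMap.ker f).mkQ x) = b ⬝ᵥ x
    simp only [Submodule.mkQ_apply, hg₀, Submodule.liftQ_apply]
    rfl
  refine ⟨fun i => g (Pi.single i 1), ?_⟩
  funext j
  have hx : ∀ x : Fin m → F, g x = (fun i => g (Pi.single i 1)) ⬝ᵥ x := by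
    intro x
    have hsingle : ∀ i : Fin m, (fun j => if i = j then (1:F) else 0) = Pi.single i 1 := by
      intro i; funext j; rw [Pi.single_apply]; by_cases h : i = j <;> simp [h, eq_comm]
    conv_lhs => rw [pi_eq_sum_univ x]
    rw [map_sum]
    simp only [_root_.map_smul, smul_eq_mul, hsingle]
    rw [dotProduct]
    exact Finset.sum_congr rfl fun i _ => mul_comm _ _
  have := key (Pi.single j 1)
  rw [hx] at this
  rw [Matrix.dotProduct_mulVec] at this
  simpa [dotProduct_single] using this

/-- the projection dropping the first coordinate -/
def tailL : (Fin (m+1) → F) →ₗ[F] (Fin m → F) := LinearMap.funLeft F F Fin.succ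

lemma rank_Mb_of_row (b : Fin m → F) (D : Matrix (Fin m) (Fin m) F) (v : Fin m → F)
    (hv : v ᵥ* D = b) : (Mb b D).rank = D.rank := by
  set e : (LinearMap.range (Mb b D).mulVecLin : Submodule F (Fin (m+1) → F)) →ₗ[F] (Fin m → F) :=
    tailL.comp (LinearMap.range (Mb b D).mulVecLin).subtype
  have he : ∀ x : Fin m → F, e ⟨(Mb b D).mulVecLin x, LinearMap.mem_range_self _ x⟩ = D *ᵥ x := by
    intro x
    show tailL ((Mb b D) *ᵥ x) = D *ᵥ x
    rw [Mb_mulVec]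
    funext i
    simp [tailL, LinearMap.funLeft, Fin.cons_succ]
  have hker : LinearMap.ker e = ⊥ := by
    rw [LinearMap.ker_eq_bot']
    rintro ⟨y, hy⟩ hey
    obtain ⟨x, rfl⟩ := hy
    have hD : D *ᵥ x = 0 := by rw [← he x]; exact hey
    have hb : b ⬝ᵥ x = 0 := by
      rw [← hv, ← Matrix.dotProduct_mulVec, hD, dotProduct_zero]
    have : (Mb b D).mulVecLin x = 0 := by
      rw [Matrix.mulVecLin_apply, Mb_mulVec, hb, hD]
      funext i
      refine Fin.cases ?_ (fun i' => ?_) i <;> simp [Fin.cons_succ, Fin.cons_zero]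
    exact Subtype.ext this
  have hrange : LinearMap.range e = LinearMap.range D.mulVecLin := by
    apply le_antisymm
    · rintro y ⟨⟨w, hw⟩, rfl⟩
      obtain ⟨x, rfl⟩ := hw
      exact ⟨x, (he x).symm⟩
    · rintro y ⟨x, rfl⟩
      exact ⟨⟨(Mb b D).mulVecLin x, LinearMap.mem_range_self _ x⟩, he x⟩
  have h1 := LinearMap.finrank_range_add_finrank_ker e
  rw [hker, hrange] at h1
  simp only [finrank_bot, add_zero] at h1
  rw [Matrix.rank, Matrix.rank, ← h1]



open scoped Classical in
/-- value used in the in-span case: `b ⬝ᵥ u` for any `u` with `D *ᵥ u = c`. -/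
noncomputable def a0 (b c : Fin m → F) (D : Matrix (Fin m) (Fin m) F) : F :=
  if h : ∃ u, D *ᵥ u = c then b ⬝ᵥ h.choose else 0

lemma a0_eq (b c : Fin m → F) (D : Matrix (Fin m) (Fin m) F) (v : Fin m → F)
    (hv : v ᵥ* D = b) {u : Fin m → F} (hu : D *ᵥ u = c) : a0 b c D = b ⬝ᵥ u := by
  classical
  have h : ∃ u, D *ᵥ u = c := ⟨u, hu⟩
  rw [a0, dif_pos h]
  have h1 : D *ᵥ h.choose = c := h.choose_spec
  rw [← hv, ← Matrix.dotProduct_mulVec, ← Matrix.dotProduct_mulVec, h1, hu]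

lemma a0_vecMul (v c : Fin m → F) (D : Matrix (Fin m) (Fin m) F)
    {u : Fin m → F} (hu : D *ᵥ u = c) : a0 (v ᵥ* D) c D = v ⬝ᵥ c := by
  rw [a0_eq _ _ _ v rfl hu, ← Matrix.dotProduct_mulVec, hu]

lemma rank_border_inSpan (a : F) (b c : Fin m → F) (D : Matrix (Fin m) (Fin m) F)
    (hc : ∃ u, D *ᵥ u = c) (hb : ∃ v, v ᵥ* D = b) :
    (border a b c D).rank = D.rank + (if a = a0 b c D then 0 else 1) := by
  classical
  obtain ⟨v, hv⟩ := hb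
  obtain ⟨u, hu⟩ := hc
  rw [rank_border_eq, rank_Mb_of_row b D v hv]
  congr 1
  have hmem : (Fin.cons a c : Fin (m+1) → F) ∈ LinearMap.range (Mb b D).mulVecLin ↔
      a = a0 b c D := by
    rw [mem_range_Mb_iff, a0_eq b c D v hv hu]
    constructor
    · rintro ⟨u', h1, h2⟩
      rw [← h1, ← hv, ← Matrix.dotProduct_mulVec, ← Matrix.dotProduct_mulVec, h2, hu]
    · rintro rfl
      exact ⟨u, rfl, hu⟩
  simp only [hmem]

lemma rank_border_indep (b c : Fin m → F) (D : Matrix (Fin m) (Fin m) F)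
    (h : ¬((∃ u, D *ᵥ u = c) ∧ (∃ v, v ᵥ* D = b))) (a a' : F) :
    (border a b c D).rank = (border a' b c D).rank := by
  classical
  rw [rank_border_eq, rank_border_eq]
  by_cases hc : ∃ u, D *ᵥ u = c
  · have hb : ¬∃ v, v ᵥ* D = b := fun hv => h ⟨hc, hv⟩
    have hy : ∃ y, D *ᵥ y = 0 ∧ b ⬝ᵥ y ≠ 0 := by
      by_contra hcon
      push_neg at hcon
      exact hb (exists_vecMul_of_ker_le b D hcon)
    obtain ⟨y, hy0, hys⟩ := hy
    obtain ⟨u, hu⟩ := hc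
    have hmem : ∀ α : F, (Fin.cons α c : Fin (m+1) → F) ∈ LinearMap.range (Mb b D).mulVecLin := by
      intro α
      rw [mem_range_Mb_iff]
      refine ⟨u + ((α - b ⬝ᵥ u) / (b ⬝ᵥ y)) • y, ?_, ?_⟩
      · rw [dotProduct_add, dotProduct_smul, smul_eq_mul, div_mul_cancel₀ _ hys]
        ring
      · rw [mulVec_add, mulVec_smul, hy0, smul_zero, add_zero, hu]
    rw [if_pos (hmem a), if_pos (hmem a')]
  · have hmem : ∀ α : F, (Fin.cons α c : Fin (m+1) → F) ∉ LinearMap.range (Mb b D).mulVecLin := by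
      intro α hm
      obtain ⟨u', _, h2⟩ := (mem_range_Mb_iff α b c D).mp hm
      exact hc ⟨u', h2⟩
    rw [if_neg (hmem a), if_neg (hmem a')]

lemma VSUM (c : Fin m → F) (t : F) :
    ∑ v : Fin m → F, W (v ⬝ᵥ c + t) =
      if c = 0 then ((Fintype.card F : ℚ)) ^ m * W t else 0 := by
  classical
  by_cases hc : c = 0
  · subst hc
    rw [if_pos rfl]
    simp only [dotProduct_zero, zero_add, Finset.sum_const, Finset.card_univ]
    rw [Fintype.card_fun, Fintype.card_fin, nsmul_eq_mul]
    push_cast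
    ring
  · rw [if_neg hc]
    have hadd : ∀ x y : Fin m → F, (x + y) ⬝ᵥ c = x ⬝ᵥ c + y ⬝ᵥ c := fun x y => by
      rw [add_dotProduct]
    have h := sum_comp_additive (fun v : Fin m → F => v ⬝ᵥ c) hadd (fun s => W (s + t))
    rw [h]
    have himg : (univ : Finset (Fin m → F)).image (fun v => v ⬝ᵥ c) = univ := by
      obtain ⟨i, hi⟩ := Function.ne_iff.mp hc
      simp only [Pi.zero_apply] at hi
      refine Finset.eq_univ_iff_forall.mpr fun s => Finset.mem_image.mpr ?_
      refine ⟨((s / c i) • (Pi.single (M := fun _ : Fin m => F) i 1)), Finset.mem_univ _, ?_⟩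
      rw [smul_dotProduct, single_dotProduct, smul_eq_mul, one_mul,
        div_mul_cancel₀ _ hi]
    rw [himg, sumW_add, mul_zero]

lemma card_vecMul_zero (D : Matrix (Fin m) (Fin m) F) :
    (#{v ∈ (univ : Finset (Fin m → F)) | v ᵥ* D = 0} : ℚ) =
      (Fintype.card F : ℚ) ^ (m - D.rank) := by
  classical
  have h1 : #{v ∈ (univ : Finset (Fin m → F)) | v ᵥ* D = 0} =
      Fintype.card {v : Fin m → F // v ᵥ* D = 0} := (Fintype.card_subtype _).symm
  have e : {v : Fin m → F // v ᵥ* D = 0} ≃ LinearMap.ker Dᵀ.mulVecLin :=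
    Equiv.subtypeEquivRight (fun v => by
      simp [LinearMap.mem_ker, Matrix.mulVecLin_apply, Matrix.mulVec_transpose])
  haveI : Fintype (LinearMap.ker Dᵀ.mulVecLin) := Fintype.ofFinite _
  have h2 : Fintype.card {v : Fin m → F // v ᵥ* D = 0} =
      Fintype.card (LinearMap.ker Dᵀ.mulVecLin) := Fintype.card_congr e
  have h3 : Fintype.card (LinearMap.ker Dᵀ.mulVecLin) =
      Fintype.card F ^ Module.finrank F (LinearMap.ker Dᵀ.mulVecLin) :=
    Module.card_eq_pow_finrank
  have h4 : Module.finrank F (LinearMap.ker Dᵀ.mulVecLin) = m - D.rank := by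
    have h5 := LinearMap.finrank_range_add_finrank_ker (Dᵀ.mulVecLin)
    have h6 : Module.finrank F (Fin m → F) = m := by
      rw [Module.finrank_pi, Fintype.card_fin]
    rw [h6] at h5
    have h7 : Module.finrank F (LinearMap.range Dᵀ.mulVecLin) = D.rank := by
      rw [← Matrix.rank_transpose D, Matrix.rank]
    rw [h7] at h5
    omega
  rw [h1, h2, h3, h4]
  push_cast
  rfl

/-- the column space, as a finset -/
noncomputable def Fc (D : Matrix (Fin m) (Fin m) F) : Finset (Fin m → F) :=
  (univ : Finset (Fin m → F)).image (fun u => D *ᵥ u)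

/-- the row space, as a finset -/
noncomputable def Fb (D : Matrix (Fin m) (Fin m) F) : Finset (Fin m → F) :=
  (univ : Finset (Fin m → F)).image (fun v => v ᵥ* D)

lemma inner_bc_sum (D : Matrix (Fin m) (Fin m) F) (t : F) :
    ∑ b ∈ Fb D, ∑ c ∈ Fc D, W (a0 b c D + t) = (Fintype.card F : ℚ) ^ D.rank * W t := by
  classical
  set q : ℚ := (Fintype.card F : ℚ) with hq
  have hq0 : q ≠ 0 := by
    rw [hq]
    exact_mod_cast Fintype.card_ne_zero
  have hadd : ∀ x y : Fin m → F, (x + y) ᵥ* D = x ᵥ* D + y ᵥ* D := fun x y => by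
    rw [Matrix.add_vecMul]
  have h := sum_comp_additive (fun v : Fin m → F => v ᵥ* D) hadd
    (fun b => ∑ c ∈ Fc D, W (a0 b c D + t))
  have hK : (#{v ∈ (univ : Finset (Fin m → F)) | v ᵥ* D = 0} : ℚ) = q ^ (m - D.rank) :=
    card_vecMul_zero D
  have hL : ∑ v : Fin m → F, ∑ c ∈ Fc D, W (a0 (v ᵥ* D) c D + t) = q ^ m * W t := by
    have hcongr : ∀ v : Fin m → F, ∑ c ∈ Fc D, W (a0 (v ᵥ* D) c D + t) =
        ∑ c ∈ Fc D, W (v ⬝ᵥ c + t) := by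
      intro v
      refine Finset.sum_congr rfl fun c hcmem => ?_
      obtain ⟨u, _, hu⟩ := Finset.mem_image.mp hcmem
      rw [a0_vecMul v c D hu]
    simp only [hcongr]
    rw [Finset.sum_comm]
    have : ∀ c ∈ Fc D, ∑ v : Fin m → F, W (v ⬝ᵥ c + t) =
        if c = 0 then q ^ m * W t else 0 := fun c _ => VSUM c t
    rw [Finset.sum_congr rfl this, Finset.sum_ite_eq' (Fc D) 0 (fun _ => q ^ m * W t)]
    rw [if_pos]
    exact Finset.mem_image.mpr ⟨0, Finset.mem_univ _, Matrix.mulVec_zero D⟩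
  rw [hL, hK] at h
  have hrank : D.rank ≤ m := Matrix.rank_le_height D
  have hpow : q ^ (m - D.rank) * (q ^ D.rank * W t) = q ^ m * W t := by
    rw [← mul_assoc, ← pow_add]
    congr 2
    omega
  have := h.symm.trans hpow.symm
  exact mul_left_cancel₀ (pow_ne_zero _ hq0) this

/-- partial trace: sum of the first `k` diagonal entries -/
def trk (k : ℕ) {n : ℕ} (X : Matrix (Fin n) (Fin n) F) : F :=
  ∑ i ∈ Finset.univ.filter (fun i : Fin n => (i : ℕ) < k), X i i

lemma trk_border (j : ℕ) (a : F) (b c : Fin m → F) (D : Matrix (Fin m) (Fin m) F) :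
    trk (j+1) (border a b c D) = a + trk j D := by
  rw [trk, trk, Finset.sum_filter, Finset.sum_filter, Fin.sum_univ_succ]
  congr 1
  · simp

/-- the matrix-sum form of the generating polynomial -/
noncomputable def PS (F : Type*) [Field F] [Fintype F] [DecidableEq F] (n k : ℕ) :
    Polynomial ℚ :=
  ∑ X : Matrix (Fin n) (Fin n) F, Polynomial.C (W (trk k X)) * Polynomial.X ^ X.rank

/-- decomposition of an `(m+1) × (m+1)` matrix into its four blocks -/
def borderEquiv (m : ℕ) :
    ((Matrix (Fin m) (Fin m) F × (Fin m → F) × (Fin m → F)) × F) ≃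
      Matrix (Fin (m+1)) (Fin (m+1)) F where
  toFun q := border q.2 q.1.2.1 q.1.2.2 q.1.1
  invFun X := ((Matrix.of (fun i j => X i.succ j.succ), fun j => X 0 j.succ,
    fun i => X i.succ 0), X 0 0)
  left_inv := by
    rintro ⟨⟨D, b, c⟩, a⟩
    refine Prod.ext (Prod.ext ?_ (Prod.ext ?_ ?_)) ?_ <;>
      simp only [border, Matrix.of_apply]
    · ext i j; simp [Fin.cons_succ]
    · funext j; simp [Fin.cons_succ, Fin.cons_zero]
    · funext i; simp [Fin.cons_succ, Fin.cons_zero]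
    · simp [Fin.cons_zero]
  right_inv := by
    intro X
    ext i j
    refine Fin.cases ?_ (fun i' => ?_) i <;> refine Fin.cases ?_ (fun j' => ?_) j <;>
      simp [border, Fin.cons_succ, Fin.cons_zero]

lemma sum_a (b c : Fin m → F) (D : Matrix (Fin m) (Fin m) F) (t : F) :
    ∑ a : F, Polynomial.C (W (a + t)) * Polynomial.X ^ (border a b c D).rank =
      if (∃ u, D *ᵥ u = c) ∧ (∃ v, v ᵥ* D = b) then
        Polynomial.C (W (a0 b c D + t)) * ((1 - Polynomial.X) * Polynomial.X ^ D.rank)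
      else 0 := by
  classical
  by_cases h : (∃ u, D *ᵥ u = c) ∧ (∃ v, v ᵥ* D = b)
  · rw [if_pos h]
    have hr : ∀ a : F, (border a b c D).rank = D.rank + if a = a0 b c D then 0 else 1 :=
      fun a => rank_border_inSpan a b c D h.1 h.2
    simp only [hr]
    set a₀ := a0 b c D with ha₀
    rw [← Finset.add_sum_erase univ _ (Finset.mem_univ a₀)]
    have h1 : ∀ a ∈ univ.erase a₀,
        Polynomial.C (W (a+t)) * Polynomial.X ^ (D.rank + if a = a₀ then 0 else 1) =
          Polynomial.C (W (a+t)) * Polynomial.X ^ (D.rank + 1) := fun a ha => by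
      rw [if_neg (Finset.ne_of_mem_erase ha)]
    rw [Finset.sum_congr rfl h1, ← Finset.sum_mul, ← map_sum]
    have h2 : ∑ a ∈ univ.erase a₀, W (a + t) = - W (a₀ + t) := by
      rw [Finset.sum_erase_eq_sub (Finset.mem_univ a₀), sumW_add, zero_sub]
    rw [h2, if_pos rfl, map_neg]
    ring
  · rw [if_neg h]
    have hr : ∀ a : F, (border a b c D).rank = (border 0 b c D).rank := fun a =>
      rank_border_indep b c D h a 0
    simp only [hr]
    rw [← Finset.sum_mul, ← map_sum, sumW_add, map_zero, zero_mul]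

lemma filter_col_eq (D : Matrix (Fin m) (Fin m) F) :
    {c ∈ (univ : Finset (Fin m → F)) | ∃ u, D *ᵥ u = c} = Fc D := by
  classical
  ext c
  simp [Fc, Finset.mem_image, eq_comm]

lemma filter_row_eq (D : Matrix (Fin m) (Fin m) F) :
    {b ∈ (univ : Finset (Fin m → F)) | ∃ v, v ᵥ* D = b} = Fb D := by
  classical
  ext b
  simp [Fb, Finset.mem_image, eq_comm]

lemma PS_rec (m j : ℕ) :
    PS F (m+1) (j+1) =
      (1 - Polynomial.X) *
        (PS F m j).comp (Polynomial.C ((Fintype.card F : ℚ)) * Polynomial.X) := by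
  classical
  have stepA : PS F (m+1) (j+1) =
      ∑ D : Matrix (Fin m) (Fin m) F, ∑ b : Fin m → F, ∑ c : Fin m → F, ∑ a : F,
        Polynomial.C (W (a + trk j D)) * Polynomial.X ^ (border a b c D).rank := by
    rw [PS, ← Equiv.sum_comp (borderEquiv m)
      (fun X => Polynomial.C (W (trk (j+1) X)) * Polynomial.X ^ X.rank)]
    rw [Fintype.sum_prod_type]
    rw [Fintype.sum_prod_type]
    refine Finset.sum_congr rfl fun D _ => ?_
    rw [Fintype.sum_prod_type]
    refine Finset.sum_congr rfl fun b _ => Finset.sum_congr rfl fun c _ =>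
      Finset.sum_congr rfl fun a _ => ?_
    simp only [borderEquiv, Equiv.coe_fn_mk]
    rw [trk_border]
  rw [stepA]
  have stepB : ∀ D : Matrix (Fin m) (Fin m) F,
      (∑ b : Fin m → F, ∑ c : Fin m → F, ∑ a : F,
        Polynomial.C (W (a + trk j D)) * Polynomial.X ^ (border a b c D).rank) =
      Polynomial.C ((Fintype.card F : ℚ) ^ D.rank * W (trk j D)) *
        ((1 - Polynomial.X) * Polynomial.X ^ D.rank) := by
    intro D
    have hbc : ∀ b c : Fin m → F, (∑ a : F,
        Polynomial.C (W (a + trk j D)) * Polynomial.X ^ (border a b c D).rank) =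
        if (∃ u, D *ᵥ u = c) ∧ (∃ v, v ᵥ* D = b) then
          Polynomial.C (W (a0 b c D + trk j D)) * ((1 - Polynomial.X) * Polynomial.X ^ D.rank)
        else 0 := fun b c => sum_a b c D (trk j D)
    simp only [hbc]
    have hsplit : ∀ b : Fin m → F, (∑ c : Fin m → F,
        if (∃ u, D *ᵥ u = c) ∧ (∃ v, v ᵥ* D = b) then
          Polynomial.C (W (a0 b c D + trk j D)) * ((1 - Polynomial.X) * Polynomial.X ^ D.rank)
        else 0) =
        if (∃ v, v ᵥ* D = b) then (∑ c ∈ Fc D,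
          Polynomial.C (W (a0 b c D + trk j D)) * ((1 - Polynomial.X) * Polynomial.X ^ D.rank))
        else 0 := by
      intro b
      by_cases hb : ∃ v, v ᵥ* D = b
      · rw [if_pos hb, ← filter_col_eq D, Finset.sum_filter]
        refine Finset.sum_congr rfl fun c _ => ?_
        by_cases hc : ∃ u, D *ᵥ u = c
        · rw [if_pos ⟨hc, hb⟩, if_pos hc]
        · rw [if_neg (fun hh => hc hh.1), if_neg hc]
      · rw [if_neg hb]
        refine Finset.sum_eq_zero fun c _ => ?_
        rw [if_neg (fun hh => hb hh.2)]
    simp only [hsplit]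
    rw [← Finset.sum_filter, filter_row_eq D]
    have : ∀ b ∈ Fb D, (∑ c ∈ Fc D,
        Polynomial.C (W (a0 b c D + trk j D)) * ((1 - Polynomial.X) * Polynomial.X ^ D.rank)) =
        (∑ c ∈ Fc D, Polynomial.C (W (a0 b c D + trk j D))) *
          ((1 - Polynomial.X) * Polynomial.X ^ D.rank) := fun b _ => by
      rw [Finset.sum_mul]
    rw [Finset.sum_congr rfl this, ← Finset.sum_mul]
    simp only [← map_sum]
    rw [inner_bc_sum D (trk j D)]
  rw [Finset.sum_congr rfl (fun D _ => stepB D)]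
  rw [PS, Polynomial.sum_comp, Finset.mul_sum]
  refine Finset.sum_congr rfl fun D _ => ?_
  simp only [Polynomial.mul_comp, Polynomial.C_comp, Polynomial.pow_comp, Polynomial.X_comp,
    Polynomial.C_mul, Polynomial.C_pow]
  ring

lemma fcard_eq (n r k : ℕ) (α : F) :
    fcard F n r k α =
      #{X ∈ (univ : Finset (Matrix (Fin n) (Fin n) F)) | X.rank = r ∧ trk k X = α} := by
  classical
  rw [fcard, Nat.card_eq_fintype_card, Fintype.card_subtype]
  congr 1

lemma gpoly_eq_PS (n k : ℕ) : gpoly F n k = PS F n k := by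
  classical
  rw [PS, gpoly]
  have hmaps : ∀ X : Matrix (Fin n) (Fin n) F, X ∈ (univ : Finset _) →
      X.rank ∈ Finset.range (n+1) := fun X _ =>
    Finset.mem_range.mpr (Nat.lt_succ_of_le (Matrix.rank_le_height X))
  rw [← Finset.sum_fiberwise_of_maps_to hmaps
    (fun X => Polynomial.C (W (trk k X)) * Polynomial.X ^ X.rank)]
  refine Finset.sum_congr rfl fun r _ => ?_
  have h1 : ∀ X ∈ {X ∈ (univ : Finset (Matrix (Fin n) (Fin n) F)) | X.rank = r},
      Polynomial.C (W (trk k X)) * Polynomial.X ^ X.rank =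
        Polynomial.C (W (trk k X)) * Polynomial.X ^ r := fun X hX => by
    rw [(Finset.mem_filter.mp hX).2]
  rw [Finset.sum_congr rfl h1, ← Finset.sum_mul, ← map_sum]
  congr 1
  have h2 : ∑ X ∈ {X ∈ (univ : Finset (Matrix (Fin n) (Fin n) F)) | X.rank = r}, W (trk k X) =
      (#{X ∈ (univ : Finset (Matrix (Fin n) (Fin n) F)) | X.rank = r ∧ trk k X = 0} : ℚ) -
      (#{X ∈ (univ : Finset (Matrix (Fin n) (Fin n) F)) | X.rank = r ∧ trk k X = 1} : ℚ) := by
    simp only [W]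
    rw [Finset.sum_sub_distrib, Finset.sum_boole, Finset.sum_boole, Finset.filter_filter,
      Finset.filter_filter]
  rw [fcard_eq n r k 0, fcard_eq n r k 1, h2]

lemma gpoly_zero (n : ℕ) : gpoly F n 0 = Apoly F n := by
  classical
  rw [gpoly, Apoly]
  refine Finset.sum_congr rfl fun r _ => ?_
  have hempty : ∀ X : Matrix (Fin n) (Fin n) F,
      (∑ i ∈ Finset.univ.filter (fun i : Fin n => (i : ℕ) < 0), X i i) = 0 := by
    intro X
    have : Finset.univ.filter (fun i : Fin n => (i : ℕ) < 0) = ∅ := by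
      refine Finset.eq_empty_of_forall_notMem fun i hi => ?_
      simp only [Finset.mem_filter] at hi
      omega
    rw [this, Finset.sum_empty]
  have h0 : fcard F n r 0 0 = acard F n r := by
    rw [fcard, acard]
    refine Nat.card_congr (Equiv.subtypeEquivRight fun X => ?_)
    simp [hempty X]
  have h1 : fcard F n r 0 1 = 0 := by
    rw [fcard]
    haveI : IsEmpty {X : Matrix (Fin n) (Fin n) F // X.rank = r ∧
        (∑ i ∈ Finset.univ.filter (fun i : Fin n => (i : ℕ) < 0), X i i) = 1} := by
      refine ⟨fun ⟨X, hX⟩ => ?_⟩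
      rw [hempty X] at hX
      exact zero_ne_one hX.2
    exact Nat.card_of_isEmpty
  rw [h0, h1]
  push_cast
  ring

lemma qPoch_succ (q : ℚ) (k : ℕ) :
    qPoch q (k+1) = (1 - Polynomial.X) * (qPoch q k).comp (Polynomial.C q * Polynomial.X) := by
  rw [qPoch, qPoch, Finset.prod_range_succ', Polynomial.prod_comp]
  have hcomp : ∀ i : ℕ, (1 - Polynomial.C (q ^ i) * Polynomial.X).comp
      (Polynomial.C q * Polynomial.X) = 1 - Polynomial.C (q ^ (i+1)) * Polynomial.X := by
    intro i
    simp only [Polynomial.sub_comp, Polynomial.one_comp, Polynomial.mul_comp,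
      Polynomial.C_comp, Polynomial.X_comp, pow_succ, Polynomial.C_mul]
    ring
  simp only [hcomp]
  rw [pow_zero, Polynomial.C_1]
  ring

lemma main_ind (k : ℕ) : ∀ n : ℕ, k ≤ n →
    gpoly F n k = qPoch ((Fintype.card F : ℚ)) k *
      (Apoly F (n - k)).comp (Polynomial.C ((Fintype.card F : ℚ) ^ k) * Polynomial.X) := by
  induction k with
  | zero =>
    intro n _
    rw [gpoly_zero, qPoch, Finset.range_zero, Finset.prod_empty, one_mul, pow_zero,
      Polynomial.C_1, one_mul, Nat.sub_zero, Polynomial.comp_X]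
  | succ k ih =>
    intro n hn
    obtain ⟨m, rfl⟩ : ∃ m, n = m + 1 := ⟨n - 1, by omega⟩
    have hk : k ≤ m := by omega
    rw [gpoly_eq_PS, PS_rec, ← gpoly_eq_PS, ih m hk]
    rw [qPoch_succ]
    rw [Polynomial.mul_comp, Polynomial.comp_assoc]
    have hcomp : (Polynomial.C ((Fintype.card F : ℚ) ^ k) * Polynomial.X).comp
        (Polynomial.C (Fintype.card F : ℚ) * Polynomial.X) =
        Polynomial.C ((Fintype.card F : ℚ) ^ (k+1)) * Polynomial.X := by
      simp only [Polynomial.mul_comp, Polynomial.C_comp, Polynomial.X_comp, pow_succ,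
        Polynomial.C_mul]
      ring
    rw [hcomp]
    have hsub : m + 1 - (k + 1) = m - k := by omega
    rw [hsub]
    ring

end Stmt14Aux

theorem stmt14 (F : Type*) [Field F] [Fintype F] (q : ℕ) (hq : Fintype.card F = q)
    (n k : ℕ) (hk1 : 1 ≤ k) (hkn : k ≤ n) :
    gpoly F n k =
      qPoch (q : ℚ) k *
        (Apoly F (n - k)).comp (Polynomial.C ((q : ℚ) ^ k) * Polynomial.X) := by
  classical
  subst hq
  exact Stmt14Aux.main_ind k n hkn
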